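/- There exists ν₀ ∈ (0,1) such that for every ν ∈ (0,ν₀] there exists n₀ ∈ ℕ such that the following holds for every n ≥ n₀. Let V = [n], let Z′ ⊆ V, let H′ be a graph with vertex set Z′, let F′ be a bipartite graph with vertex partition (Z′, V∖Z′), and let x ∈ V∖Z′ and z ∈ Z′ with xz ∉ E(F′). Let D be a feasible degree sequence on V such that: every w ∈ V with d(w) > n^{1/4} satisfies w ∈ Z′ and d(w) = d_{H′}(w); Σ_{w∈Z′} (d(w) − d_{H′}(w) − d_{F′}(w)) ≤ νn; and Σ_{w∈V∖Z′} (d(w) − d_{F′}(w)) ≥ n/20. Set Z″ := Z′∖{z}. Then for every integer i ≥ 0 and for E being either the event {xz ∈ E(G^D)} or the event {xz ∉ E(G^D)}, provided the conditioning event has positive probability, P[ d_{G^D}(x, Z″) − d_{F′}(x) > ⌊√ν·(d(x) − d_{F′}(x))⌋ + i | G^D[Z′] = H′, F′ ⊆ G^D, E ] ≤ (22√ν)^{i+1}; consequently the same bound holds conditioning only on {G^D[Z′] = H′, F′ ⊆ G^D}. -/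

import Mathlib

/-!
Call `w ∈ Z' \ {z}` a back neighbour of `x` when `xw ∈ G \ F'`. Switching a back edge `xw`
with an edge `uv` outside `Z'` (delete `xw`, `uv`, add `xu`, `wv`) keeps the degree sequence,
`G[Z']`, `F' ⊆ G` and the status of `xz`, and removes exactly one back neighbour. Counting
free half-edges, at least `n / 20 - νn` ordered edges `uv` lie outside `Z'`, and only `O(√n)`
of them meet `N(x)` or `N(w)`, since vertices outside `Z'` have degree at most `n^{1/4}`; so a
graph with `j` back neighbours admits at least `j · n / 21` switchings. Conversely, a graph
arises from at most `(d(x) - d_{F'}(x)) · νn` switchings. Double counting shows that, once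
`k ≥ √ν (d(x) - d_{F'}(x))`, passing from at least `k` to at least `k + 1` back neighbours
shrinks the number of graphs by a factor `21√ν`; iterating `i + 1` times gives the bound.
-/

open Finset

noncomputable section
open scoped Classical

/-- The finset of all simple graphs on `Fin n` realising the degree sequence `D`
(vertex `v` has degree `D v`). -/
def graphsWithDegreeSeq (n : ℕ) (D : Fin n → ℕ) : Finset (SimpleGraph (Fin n)) :=
  Finset.univ.filter (fun G => ∀ v, G.degree v = D v)

/-- Conditional probability `P[A | B]` under the uniform distribution on simple graphs
with degree sequence `D`. -/
def uniformCondProb (n : ℕ) (D : Fin n → ℕ) (A B : SimpleGraph (Fin n) → Prop) : ℝ :=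
  (((graphsWithDegreeSeq n D).filter (fun G => A G ∧ B G)).card : ℝ) /
    (((graphsWithDegreeSeq n D).filter B).card : ℝ)

/-- Number of neighbours of `x` in the set `Z` in the graph `G`. -/
def degIn {n : ℕ} (G : SimpleGraph (Fin n)) (x : Fin n) (Z : Finset (Fin n)) : ℕ :=
  (Z.filter (fun w => G.Adj x w)).card

theorem Finset.card_mul_le_card_mul_of_switching {α ι R : Type*} [CommSemiring R]
    [PartialOrder R] [IsOrderedRing R] {s t : Finset α} {fwd bwd : α → Finset ι}
    {f g : α → ι → α} {p q : R}
    (hmaps : ∀ a ∈ s, ∀ i ∈ fwd a, f a i ∈ t ∧ i ∈ bwd (f a i))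
    (hinv : ∀ a ∈ s, ∀ i ∈ fwd a, g (f a i) i = a)
    (hp : ∀ a ∈ s, p ≤ #(fwd a)) (hq : ∀ b ∈ t, (#(bwd b) : R) ≤ q) :
    #s * p ≤ #t * q := by
  have hinj : #(s.sigma fwd) ≤ #(t.sigma bwd) := by
    refine card_le_card_of_injOn (fun y => ⟨f y.1 y.2, y.2⟩) (fun y hy => ?_)
      fun ⟨a, i⟩ hy ⟨a', i'⟩ hy' he => ?_
    · rw [mem_coe, mem_sigma] at hy ⊢
      exact hmaps _ hy.1 _ hy.2
    · simp only [Sigma.mk.injEq, heq_eq_eq] at he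
      obtain ⟨he, rfl⟩ := he
      rw [mem_coe, mem_sigma] at hy hy'
      rw [← hinv a hy.1 i hy.2, ← hinv a' hy'.1 i hy'.2, he]
  calc #s * p = ∑ a ∈ s, p := by rw [sum_const, nsmul_eq_mul]
    _ ≤ ∑ a ∈ s, (#(fwd a) : R) := sum_le_sum hp
    _ ≤ ∑ b ∈ t, (#(bwd b) : R) := by
      rw [← Nat.cast_sum, ← Nat.cast_sum, ← card_sigma, ← card_sigma]
      exact Nat.mono_cast hinj
    _ ≤ ∑ b ∈ t, q := sum_le_sum hq
    _ = #t * q := by rw [sum_const, nsmul_eq_mul]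

theorem Finset.card_filter_product {α β : Type*} (s : Finset α) (t : Finset β)
    (r : α → β → Prop) [DecidablePred fun p : α × β => r p.1 p.2]
    [∀ a, DecidablePred (r a)] :
    #{p ∈ s ×ˢ t | r p.1 p.2} = ∑ a ∈ s, #{b ∈ t | r a b} := by
  simp only [card_filter, sum_product]

theorem rpow_quarter_pow_four {y : ℝ} (hy : 0 ≤ y) : (y ^ ((1 : ℝ) / 4)) ^ 4 = y := by
  simpa using Real.rpow_inv_natCast_pow hy (n := 4) (by norm_num)

theorem div_twentyOne_le {r ν : ℝ} (hr : 100 ≤ r) (hν : ν ≤ 1 / 1000) :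
    r ^ 4 / 21 ≤ r ^ 4 / 20 - ν * r ^ 4 - ((r + 1) * r + r * r) := by
  have h4 : 0 ≤ r ^ 4 := by positivity
  have hsq : 10000 ≤ r ^ 2 := by nlinarith
  nlinarith

namespace SimpleGraph

section Switch

variable {V : Type*} {G : SimpleGraph V} {x w u v : V}

def switch (G : SimpleGraph V) (x w u v : V) : SimpleGraph V :=
  fromEdgeSet (G.edgeSet \ {s(x, w), s(u, v)} ∪ {s(x, u), s(w, v)})

theorem switch_adj {a b : V} :
    (G.switch x w u v).Adj a b ↔
      (G.Adj a b ∧ s(a, b) ≠ s(x, w) ∧ s(a, b) ≠ s(u, v) ∨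
        s(a, b) = s(x, u) ∨ s(a, b) = s(w, v)) ∧ a ≠ b := by
  simp only [switch, fromEdgeSet_adj, Set.mem_union, Set.mem_sdiff, mem_edgeSet,
    Set.mem_insert_iff, Set.mem_singleton_iff]
  tauto

theorem switch_comm_left (G : SimpleGraph V) (x w u v : V) :
    G.switch x w u v = G.switch w x v u := by
  ext a b
  simp only [switch_adj, Sym2.eq_swap (a := w) (b := x), Sym2.eq_swap (a := v) (b := u)]
  tauto

theorem switch_comm_pairs (G : SimpleGraph V) (x w u v : V) :
    G.switch x w u v = G.switch u v x w := by
  ext a b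
  simp only [switch_adj, Sym2.eq_swap (a := u) (b := x), Sym2.eq_swap (a := v) (b := w)]
  tauto

theorem switch_adj_of_ne {a b : V} (hxw : s(a, b) ≠ s(x, w)) (huv : s(a, b) ≠ s(u, v))
    (hxu : s(a, b) ≠ s(x, u)) (hwv : s(a, b) ≠ s(w, v)) :
    (G.switch x w u v).Adj a b ↔ G.Adj a b := by
  rw [switch_adj]
  exact ⟨by tauto, fun hab => ⟨Or.inl ⟨hab, hxw, huv⟩, hab.ne⟩⟩

theorem le_switch {F : SimpleGraph V} (hFG : F ≤ G) (hxw : ¬F.Adj x w) (huv : ¬F.Adj u v) :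
    F ≤ G.switch x w u v := by
  intro a b hab
  have hab' : s(a, b) ∈ F.edgeSet := hab
  refine switch_adj.2 ⟨Or.inl ⟨hFG hab, fun he => hxw ?_, fun he => huv ?_⟩, hab.ne⟩
  · rwa [he] at hab'
  · rwa [he] at hab'

structure IsSwitching (G : SimpleGraph V) (x w u v : V) : Prop where
  adj_xw : G.Adj x w
  adj_uv : G.Adj u v
  not_adj_xu : ¬G.Adj x u
  not_adj_wv : ¬G.Adj w v
  ne_xu : x ≠ u
  ne_wv : w ≠ v

namespace IsSwitching

variable (h : G.IsSwitching x w u v)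
include h

theorem swap_left : G.IsSwitching w x v u :=
  ⟨h.adj_xw.symm, h.adj_uv.symm, h.not_adj_wv, h.not_adj_xu, h.ne_wv, h.ne_xu⟩

theorem swap_pairs : G.IsSwitching u v x w :=
  ⟨h.adj_uv, h.adj_xw, fun h' => h.not_adj_xu h'.symm, fun h' => h.not_adj_wv h'.symm,
    h.ne_xu.symm, h.ne_wv.symm⟩

theorem ne_xv : x ≠ v := by rintro rfl; exact h.not_adj_wv h.adj_xw.symm
theorem ne_wu : w ≠ u := by rintro rfl; exact h.not_adj_wv h.adj_uv

theorem switch_adj_left (b : V) :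
    (G.switch x w u v).Adj x b ↔ b = u ∨ b ≠ w ∧ G.Adj x b := by
  have := h.ne_xv; have := h.ne_wu; have := h.ne_xu; have := h.adj_xw.ne
  rw [switch_adj]
  constructor
  · aesop
  · rintro (rfl | ⟨hb, hadj⟩)
    · aesop
    · exact ⟨Or.inl ⟨hadj, by aesop, by aesop⟩, hadj.ne⟩

theorem edgeSet_switch :
    (G.switch x w u v).edgeSet = G.edgeSet \ {s(x, w), s(u, v)} ∪ {s(x, u), s(w, v)} := by
  rw [switch, edgeSet_fromEdgeSet, sdiff_eq_left, Set.disjoint_left]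
  rintro e (⟨he, -⟩ | rfl | rfl) hdiag
  · exact G.not_isDiag_of_mem_edgeSet he hdiag
  · exact h.ne_xu (Sym2.mk_isDiag_iff.1 hdiag)
  · exact h.ne_wv (Sym2.mk_isDiag_iff.1 hdiag)

theorem switch_switch : (G.switch x w u v).switch x u w v = G := by
  have h' : (G.switch x w u v).IsSwitching x u w v := by
    refine ⟨(h.switch_adj_left u).2 (Or.inl rfl), ?_, fun hxw => ?_, fun huv => ?_, h.adj_xw.ne,
      h.adj_uv.ne⟩
    · rw [switch_comm_left]
      exact (h.swap_left.switch_adj_left v).2 (Or.inl rfl)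
    · rcases (h.switch_adj_left w).1 hxw with hwu | ⟨hww, -⟩
      exacts [h.ne_wu hwu, hww rfl]
    · rw [switch_comm_pairs] at huv
      rcases (h.swap_pairs.switch_adj_left v).1 huv with hvx | ⟨hvv, -⟩
      exacts [h.ne_xv hvx.symm, hvv rfl]
  rw [← edgeSet_inj, h'.edgeSet_switch, h.edgeSet_switch]
  have hxw := G.mem_edgeSet.2 h.adj_xw
  have huv := G.mem_edgeSet.2 h.adj_uv
  have hxu : s(x, u) ∉ G.edgeSet := h.not_adj_xu
  have hwv : s(w, v) ∉ G.edgeSet := h.not_adj_wv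
  ext e
  simp only [Set.mem_union, Set.mem_sdiff, Set.mem_insert_iff, Set.mem_singleton_iff]
  constructor
  · rintro (⟨(⟨he, -⟩ | rfl | rfl), hnot⟩ | rfl | rfl) <;> simp_all
  · intro he
    by_cases e = s(x, w) <;> by_cases e = s(u, v) <;> aesop

variable [Fintype V]

theorem neighborFinset_switch_left :
    (G.switch x w u v).neighborFinset x = insert u ((G.neighborFinset x).erase w) := by
  ext b
  simp only [mem_neighborFinset, mem_insert, mem_erase, h.switch_adj_left]

theorem degree_switch_left : (G.switch x w u v).degree x = G.degree x := by
  have hw : w ∈ G.neighborFinset x := (G.mem_neighborFinset _ _).2 h.adj_xw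
  rw [← card_neighborFinset_eq_degree, ← card_neighborFinset_eq_degree,
    h.neighborFinset_switch_left, card_insert_of_notMem (by simp [h.not_adj_xu]),
    card_erase_add_one hw]

theorem degree_switch (a : V) : (G.switch x w u v).degree a = G.degree a := by
  by_cases hax : a = x
  · subst hax; exact h.degree_switch_left
  by_cases haw : a = w
  · subst haw; rw [switch_comm_left]; exact h.swap_left.degree_switch_left
  by_cases hau : a = u
  · subst hau; rw [switch_comm_pairs]; exact h.swap_pairs.degree_switch_left
  by_cases hav : a = v
  · subst hav; rw [switch_comm_pairs, switch_comm_left]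
    exact h.swap_pairs.swap_left.degree_switch_left
  rw [← card_neighborFinset_eq_degree, ← card_neighborFinset_eq_degree]
  congr 1
  ext b
  simp only [mem_neighborFinset]
  exact switch_adj_of_ne (by simp [hax, haw]) (by simp [hau, hav]) (by simp [hax, hau])
    (by simp [haw, hav])

end IsSwitching

end Switch

variable {V : Type*} [Fintype V] {G H F : SimpleGraph V} [DecidableRel G.Adj]
  [DecidableRel H.Adj] [DecidableRel F.Adj] {Z S : Finset V} {D : V → ℕ} {a x z w u v : V}
  {n : ℕ} {r ν : ℝ}

theorem card_filter_adj_eq_degree_add (hFG : F ≤ G) (hS : F.neighborFinset a ⊆ S) :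
    #{b ∈ S | G.Adj a b} = F.degree a + #{b ∈ S | (G \ F).Adj a b} := by
  rw [← card_filter_add_card_filter_not (p := F.Adj a), filter_filter, filter_filter,
    ← card_neighborFinset_eq_degree]
  congr 2
  ext b
  simp only [mem_filter, mem_neighborFinset]
  exact ⟨fun h => h.2.2, fun h => ⟨hS ((F.mem_neighborFinset _ _).2 h), hFG h, h⟩⟩

theorem card_filter_adj_eq_degree_of_agree (hH : ∀ a b, H.Adj a b → a ∈ Z ∧ b ∈ Z)
    (hGZ : ∀ a b, a ∈ Z → b ∈ Z → (G.Adj a b ↔ H.Adj a b)) (ha : a ∈ Z) :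
    #{b ∈ Z | G.Adj a b} = H.degree a := by
  rw [← card_neighborFinset_eq_degree]
  congr 1
  ext b
  simp only [mem_filter, mem_neighborFinset]
  exact ⟨fun h => (hGZ a b ha h.1).1 h.2,
    fun h => ⟨(hH a b h).2, (hGZ a b ha (hH a b h).2).2 h⟩⟩

variable [DecidableEq V]

theorem degree_eq_card_filter_add_card_filter_compl (Z : Finset V) (a : V) :
    G.degree a = #{b ∈ Z | G.Adj a b} + #{b ∈ Zᶜ | G.Adj a b} := by
  rw [← card_neighborFinset_eq_degree, neighborFinset_eq_filter, card_filter, card_filter,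
    card_filter, sum_add_sum_compl]

section Bipartite

variable (hF : ∀ a b, F.Adj a b → a ∈ Z ∧ b ∉ Z ∨ a ∉ Z ∧ b ∈ Z) (hFG : F ≤ G)
include hF hFG

theorem degree_eq_of_mem (hH : ∀ a b, H.Adj a b → a ∈ Z ∧ b ∈ Z)
    (hGZ : ∀ a b, a ∈ Z → b ∈ Z → (G.Adj a b ↔ H.Adj a b)) (ha : a ∈ Z) :
    G.degree a = H.degree a + F.degree a + #{b ∈ Zᶜ | (G \ F).Adj a b} := by
  have hS : F.neighborFinset a ⊆ Zᶜ := fun b hb => by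
    have := hF a b ((F.mem_neighborFinset _ _).1 hb)
    simp_all
  rw [degree_eq_card_filter_add_card_filter_compl Z, card_filter_adj_eq_degree_of_agree hH hGZ ha,
    card_filter_adj_eq_degree_add hFG hS, add_assoc]

theorem degree_eq_of_notMem (ha : a ∉ Z) :
    G.degree a = F.degree a + #{b ∈ Z | (G \ F).Adj a b} + #{b ∈ Zᶜ | G.Adj a b} := by
  have hS : F.neighborFinset a ⊆ Z := fun b hb => by
    have := hF a b ((F.mem_neighborFinset _ _).1 hb)
    simp_all
  rw [degree_eq_card_filter_add_card_filter_compl Z, card_filter_adj_eq_degree_add hFG hS]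

end Bipartite

theorem sum_card_filter_compl_eq_sum_card_filter (G : SimpleGraph V) [DecidableRel G.Adj]
    (Z : Finset V) :
    ∑ a ∈ Zᶜ, #{b ∈ Z | G.Adj a b} = ∑ a ∈ Z, #{b ∈ Zᶜ | G.Adj a b} := by
  change ∑ a ∈ Zᶜ, #(Z.bipartiteAbove G.Adj a) = _
  rw [sum_card_bipartiteAbove_eq_sum_card_bipartiteBelow]
  refine sum_congr rfl fun b _ => ?_
  simp only [bipartiteBelow, G.adj_comm _ b]

section Identities

variable (hH : ∀ a b, H.Adj a b → a ∈ Z ∧ b ∈ Z)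
  (hF : ∀ a b, F.Adj a b → a ∈ Z ∧ b ∉ Z ∨ a ∉ Z ∧ b ∈ Z)
  (hGZ : ∀ a b, a ∈ Z → b ∈ Z → (G.Adj a b ↔ H.Adj a b)) (hFG : F ≤ G)
include hH hF hGZ hFG

theorem sum_card_filter_sdiff_adj_compl :
    ∑ a ∈ Z, (#{b ∈ Zᶜ | (G \ F).Adj a b} : ℝ) =
      ∑ a ∈ Z, ((G.degree a : ℝ) - H.degree a - F.degree a) :=
  sum_congr rfl fun a ha => by
    rw [degree_eq_of_mem hF hFG hH hGZ ha]
    push_cast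
    ring

theorem card_filter_adj_compl_product :
    (#{p ∈ Zᶜ ×ˢ Zᶜ | G.Adj p.1 p.2} : ℝ) =
      ∑ a ∈ Zᶜ, ((G.degree a : ℝ) - F.degree a) -
        ∑ a ∈ Z, ((G.degree a : ℝ) - H.degree a - F.degree a) := by
  have hdc : ∑ a ∈ Zᶜ, (#{b ∈ Z | (G \ F).Adj a b} : ℝ) =
      ∑ a ∈ Z, (#{b ∈ Zᶜ | (G \ F).Adj a b} : ℝ) := by
    exact_mod_cast sum_card_filter_compl_eq_sum_card_filter (G \ F) Z
  rw [card_filter_product _ _ G.Adj, ← sum_card_filter_sdiff_adj_compl hH hF hGZ hFG, ← hdc,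
    Nat.cast_sum, ← sum_sub_distrib]
  refine sum_congr rfl fun a ha => ?_
  rw [degree_eq_of_notMem hF hFG (mem_compl.1 ha)]
  push_cast
  ring

end Identities

theorem card_le_card_mul_of_degree_le {P : Finset (V × V)} {T : Finset V}
    (hT : ∀ a ∈ T, (G.degree a : ℝ) ≤ r) (h : ∀ p ∈ P, p.1 ∈ T ∧ G.Adj p.1 p.2) :
    (#P : ℝ) ≤ #T * r := by
  have hfib : #P ≤ ∑ a ∈ T, G.degree a := by
    rw [card_eq_sum_card_fiberwise fun p hp => (h p hp).1]
    refine sum_le_sum fun a _ => card_le_card_of_injOn Prod.snd (fun p hp => ?_)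
      fun p hp p' hp' he => ?_
    · rw [mem_coe, mem_filter] at hp
      rw [mem_coe, mem_neighborFinset, ← hp.2]
      exact (h p hp.1).2
    · rw [mem_coe, mem_filter] at hp hp'
      exact Prod.ext (hp.2.trans hp'.2.symm) he
  calc (#P : ℝ) ≤ ∑ a ∈ T, (G.degree a : ℝ) := by exact_mod_cast hfib
    _ ≤ #T * r := by simpa using sum_le_card_nsmul T _ r hT

def backNeighbors (G F : SimpleGraph V) [DecidableRel G.Adj] [DecidableRel F.Adj] (Z : Finset V)
    (x z : V) : Finset V :=
  {w ∈ Z.erase z | (G \ F).Adj x w}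

-- `(w, u, v)` encodes the switching `G.switch x w u v`: delete `xw`, `uv`, add `xu`, `wv`.
def forwardSwitchings (G F : SimpleGraph V) [DecidableRel G.Adj] [DecidableRel F.Adj]
    (Z : Finset V) (x z : V) : Finset (V × V × V) :=
  {t ∈ G.backNeighbors F Z x z ×ˢ (Zᶜ ×ˢ Zᶜ) |
    G.Adj t.2.1 t.2.2 ∧ ¬G.Adj x t.2.1 ∧ t.2.1 ≠ x ∧ ¬G.Adj t.1 t.2.2}

-- Only the constraints needed to bound its size; it still contains every reversed forward
-- switching (`mem_backwardSwitchings_switch`).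
def backwardSwitchings (G F : SimpleGraph V) [DecidableRel G.Adj] [DecidableRel F.Adj]
    (Z : Finset V) (x : V) : Finset (V × V × V) :=
  {t ∈ Z ×ˢ (univ ×ˢ Zᶜ) | (G \ F).Adj x t.2.1 ∧ (G \ F).Adj t.1 t.2.2}

theorem card_backwardSwitchings (hH : ∀ a b, H.Adj a b → a ∈ Z ∧ b ∈ Z)
    (hF : ∀ a b, F.Adj a b → a ∈ Z ∧ b ∉ Z ∨ a ∉ Z ∧ b ∈ Z)
    (hGZ : ∀ a b, a ∈ Z → b ∈ Z → (G.Adj a b ↔ H.Adj a b)) (hFG : F ≤ G) :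
    (#(G.backwardSwitchings F Z x) : ℝ) =
      ((G.degree x : ℝ) - F.degree x) *
        ∑ a ∈ Z, ((G.degree a : ℝ) - H.degree a - F.degree a) := by
  have hx : G.degree x = F.degree x + #{u | (G \ F).Adj x u} := by
    rw [← card_filter_adj_eq_degree_add hFG (subset_univ _), ← card_neighborFinset_eq_degree,
      neighborFinset_eq_filter]
  rw [← sum_card_filter_sdiff_adj_compl hH hF hGZ hFG, backwardSwitchings,
    card_filter_product _ _ fun (a : V) (q : V × V) => (G \ F).Adj x q.1 ∧ (G \ F).Adj a q.2,
    Nat.cast_sum, mul_sum, hx]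
  refine sum_congr rfl fun a _ => ?_
  rw [filter_product (fun u => (G \ F).Adj x u) fun b => (G \ F).Adj a b, card_product]
  push_cast
  ring

theorem card_filter_adj_sub_le_card_filter_not_adj (hx : x ∉ Z)
    (hr : ∀ a ∉ Z, (G.degree a : ℝ) ≤ r) (hw : (#{b ∈ Zᶜ | G.Adj w b} : ℝ) ≤ r) :
    (#{q ∈ Zᶜ ×ˢ Zᶜ | G.Adj q.1 q.2} : ℝ) - ((r + 1) * r + r * r) ≤
      #{q ∈ Zᶜ ×ˢ Zᶜ |
        G.Adj q.1 q.2 ∧ ¬G.Adj x q.1 ∧ q.1 ≠ x ∧ ¬G.Adj w q.2} := by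
  set P := {q ∈ Zᶜ ×ˢ Zᶜ | G.Adj q.1 q.2}
  set T₁ := {a ∈ insert x (G.neighborFinset x) | a ∉ Z}
  set T₂ := {b ∈ Zᶜ | G.Adj w b}
  have hr0 : 0 ≤ r := (Nat.cast_nonneg _).trans (hr x hx)
  have hT₁ : (#T₁ : ℝ) ≤ r + 1 := by
    have : (#T₁ : ℝ) ≤ G.degree x + 1 := by
      exact_mod_cast (card_filter_le _ _).trans (card_insert_le _ _)
    linarith [hr x hx]
  have hbad₁ : (#{q ∈ P | G.Adj x q.1 ∨ q.1 = x} : ℝ) ≤ (r + 1) * r := by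
    refine (card_le_card_mul_of_degree_le (T := T₁) (fun a ha => hr a (mem_filter.1 ha).2)
      fun q hq => ?_).trans (mul_le_mul_of_nonneg_right hT₁ hr0)
    simp only [P, T₁, mem_filter, mem_product, mem_compl, mem_insert, mem_neighborFinset] at hq ⊢
    exact ⟨⟨hq.2.elim Or.inr Or.inl, hq.1.1.1⟩, hq.1.2⟩
  have hbad₂ : (#{q ∈ P | G.Adj w q.2} : ℝ) ≤ r * r := by
    rw [← card_image_of_injective _ Prod.swap_injective]
    refine (card_le_card_mul_of_degree_le (T := T₂)
      (fun a ha => hr a (mem_compl.1 (mem_filter.1 ha).1)) fun q hq => ?_).trans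
      (mul_le_mul_of_nonneg_right hw hr0)
    obtain ⟨p, hp, rfl⟩ := mem_image.1 hq
    simp only [P, T₂, mem_filter, mem_product, mem_compl, Prod.fst_swap, Prod.snd_swap] at hp ⊢
    exact ⟨⟨hp.1.1.2, hp.2⟩, hp.1.2.symm⟩
  have hcover : #P ≤
      #{q ∈ Zᶜ ×ˢ Zᶜ | G.Adj q.1 q.2 ∧ ¬G.Adj x q.1 ∧ q.1 ≠ x ∧ ¬G.Adj w q.2} +
        #{q ∈ P | G.Adj x q.1 ∨ q.1 = x} + #{q ∈ P | G.Adj w q.2} := by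
    refine (card_le_card fun q hq => ?_).trans ((card_union_le _ _).trans
      (Nat.add_le_add_right (card_union_le _ _) _))
    simp only [P, mem_union, mem_filter] at hq ⊢
    tauto
  have := (Nat.cast_le (α := ℝ)).2 hcover
  push_cast at this
  linarith

theorem card_backNeighbors_mul_le_card_forwardSwitchings_of_degree_le (hx : x ∉ Z)
    (hr : ∀ a ∉ Z, (G.degree a : ℝ) ≤ r)
    (hcross : ∀ w ∈ Z, (#{b ∈ Zᶜ | G.Adj w b} : ℝ) ≤ r) :
    #(G.backNeighbors F Z x z) *
        ((#{q ∈ Zᶜ ×ˢ Zᶜ | G.Adj q.1 q.2} : ℝ) - ((r + 1) * r + r * r)) ≤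
      #(G.forwardSwitchings F Z x z) := by
  rw [forwardSwitchings, card_filter_product _ _ fun (w : V) (q : V × V) =>
    G.Adj q.1 q.2 ∧ ¬G.Adj x q.1 ∧ q.1 ≠ x ∧ ¬G.Adj w q.2, Nat.cast_sum, ← nsmul_eq_mul]
  refine card_nsmul_le_sum _ _ _ fun w hw => ?_
  exact card_filter_adj_sub_le_card_filter_not_adj hx hr
    (hcross w (mem_of_mem_erase (mem_filter.1 hw).1))

theorem mem_forwardSwitchings : (w, u, v) ∈ G.forwardSwitchings F Z x z ↔
    ((w ∈ Z.erase z ∧ (G \ F).Adj x w) ∧ u ∉ Z ∧ v ∉ Z) ∧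
      G.Adj u v ∧ ¬G.Adj x u ∧ u ≠ x ∧ ¬G.Adj w v := by
  simp only [forwardSwitchings, backNeighbors, mem_filter, mem_product, mem_compl]

section Switching

variable (ht : (w, u, v) ∈ G.forwardSwitchings F Z x z)
include ht

theorem isSwitching_of_mem_forwardSwitchings : G.IsSwitching x w u v := by
  obtain ⟨⟨⟨hw, hxw⟩, -, hv⟩, huv, hxu, hux, hwv⟩ := mem_forwardSwitchings.1 ht
  exact ⟨hxw.1, huv, hxu, hwv, hux.symm, fun h => hv (h ▸ mem_of_mem_erase hw)⟩

theorem switch_adj_of_mem_forwardSwitchings (hx : x ∉ Z) {a b : V} (ha : a ∈ Z) (hb : b ∈ Z) :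
    (G.switch x w u v).Adj a b ↔ G.Adj a b := by
  obtain ⟨⟨-, hu, hv⟩, -⟩ := mem_forwardSwitchings.1 ht
  have key : ∀ c d, c ∉ Z → s(a, b) ≠ s(c, d) ∧ s(a, b) ≠ s(d, c) := fun c d hc => by
    simp only [ne_eq, Sym2.eq_iff]
    constructor <;> rintro (⟨rfl, rfl⟩ | ⟨rfl, rfl⟩) <;> contradiction
  exact switch_adj_of_ne (key x w hx).1 (key u v hu).1 (key x u hx).1 (key v w hv).2

theorem switch_adj_left_of_mem_forwardSwitchings (hz : z ∈ Z) :
    (G.switch x w u v).Adj x z ↔ G.Adj x z := by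
  obtain ⟨⟨⟨hw, -⟩, hu, -⟩, -⟩ := mem_forwardSwitchings.1 ht
  rw [(isSwitching_of_mem_forwardSwitchings ht).switch_adj_left]
  exact ⟨fun h => h.resolve_left (by rintro rfl; exact hu hz) |>.2,
    fun h => Or.inr ⟨fun hzw => (ne_of_mem_erase hw) hzw.symm, h⟩⟩

theorem backNeighbors_switch :
    (G.switch x w u v).backNeighbors F Z x z = (G.backNeighbors F Z x z).erase w := by
  obtain ⟨⟨-, hu, -⟩, -⟩ := mem_forwardSwitchings.1 ht
  ext b
  simp only [backNeighbors, mem_erase, mem_filter, sdiff_adj,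
    (isSwitching_of_mem_forwardSwitchings ht).switch_adj_left]
  constructor
  · rintro ⟨hb, (rfl | ⟨hbw, hxb⟩), hF⟩
    exacts [absurd hb.2 hu, ⟨hbw, hb, hxb, hF⟩]
  · rintro ⟨hbw, hb, hxb, hF⟩
    exact ⟨hb, Or.inr ⟨hbw, hxb⟩, hF⟩

variable (hF : ∀ a b, F.Adj a b → a ∈ Z ∧ b ∉ Z ∨ a ∉ Z ∧ b ∈ Z) (hFG : F ≤ G)
include hF hFG

theorem le_switch_of_mem_forwardSwitchings : F ≤ G.switch x w u v := by
  obtain ⟨⟨⟨-, hxw⟩, hu, hv⟩, -⟩ := mem_forwardSwitchings.1 ht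
  exact le_switch hFG ((sdiff_adj _ _ _ _).1 hxw).2 fun h => by have := hF u v h; tauto

theorem mem_backwardSwitchings_switch (hx : x ∉ Z) :
    (w, u, v) ∈ (G.switch x w u v).backwardSwitchings F Z x := by
  have hs := isSwitching_of_mem_forwardSwitchings ht
  obtain ⟨⟨⟨hw, -⟩, hu, hv⟩, -, -, -, hwv⟩ := mem_forwardSwitchings.1 ht
  simp only [backwardSwitchings, mem_filter, mem_product, mem_univ, mem_compl, sdiff_adj]
  refine ⟨⟨mem_of_mem_erase hw, trivial, hv⟩, ⟨(hs.switch_adj_left u).2 (Or.inl rfl),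
    fun h => by have := hF x u h; tauto⟩, ?_, fun h => hwv (hFG h)⟩
  rw [switch_comm_left]
  exact (hs.swap_left.switch_adj_left v).2 (Or.inl rfl)

end Switching

section

variable (hH : ∀ a b, H.Adj a b → a ∈ Z ∧ b ∈ Z)
  (hF : ∀ a b, F.Adj a b → a ∈ Z ∧ b ∉ Z ∨ a ∉ Z ∧ b ∈ Z)
  (hGZ : ∀ a b, a ∈ Z → b ∈ Z → (G.Adj a b ↔ H.Adj a b)) (hFG : F ≤ G)
  (hdeg : ∀ a, G.degree a = D a)
  (hin : ∑ w ∈ Z, ((D w : ℝ) - H.degree w - F.degree w) ≤ ν * n)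
include hH hF hGZ hFG hdeg hin

theorem card_backwardSwitchings_le :
    (#(G.backwardSwitchings F Z x) : ℝ) ≤ ((D x : ℝ) - F.degree x) * (ν * n) := by
  rw [card_backwardSwitchings hH hF hGZ hFG]
  simp only [hdeg] at hin ⊢
  refine mul_le_mul_of_nonneg_left hin (sub_nonneg.2 ?_)
  rw [← hdeg]
  exact_mod_cast degree_le_of_le hFG

theorem card_backNeighbors_mul_le_card_forwardSwitchings (hn : 10 ^ 8 ≤ n) (hν : ν ≤ 1 / 1000)
    (hbig : ∀ w, (n : ℝ) ^ ((1 : ℝ) / 4) < D w → w ∈ Z ∧ H.degree w = D w)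
    (hout : (n : ℝ) / 20 ≤ ∑ w ∈ Zᶜ, ((D w : ℝ) - F.degree w)) (hx : x ∉ Z) :
    (#(G.backNeighbors F Z x z) : ℝ) * (n / 21) ≤ #(G.forwardSwitchings F Z x z) := by
  set r := (n : ℝ) ^ ((1 : ℝ) / 4)
  have hr4 : r ^ 4 = n := rpow_quarter_pow_four (Nat.cast_nonneg n)
  have hr : 100 ≤ r := by
    refine le_of_pow_le_pow_left₀ (n := 4) (by norm_num) (by positivity) ?_
    rw [hr4]
    exact_mod_cast (by norm_num : 100 ^ 4 ≤ 10 ^ 8).trans hn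
  have hsmall : ∀ a, a ∉ Z → (D a : ℝ) ≤ r := fun a ha =>
    not_lt.1 fun h => ha (hbig a h).1
  have hcross : ∀ w ∈ Z, (#{b ∈ Zᶜ | G.Adj w b} : ℝ) ≤ r := fun w hw => by
    have hsplit := degree_eq_card_filter_add_card_filter_compl (G := G) Z w
    rw [card_filter_adj_eq_degree_of_agree hH hGZ hw, hdeg] at hsplit
    by_cases hwr : r < D w
    · have : #{b ∈ Zᶜ | G.Adj w b} = 0 := by have := (hbig w hwr).2; omega
      rw [this, Nat.cast_zero]
      linarith
    · have : #{b ∈ Zᶜ | G.Adj w b} ≤ D w := by omega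
      exact le_trans (by exact_mod_cast this) (not_lt.1 hwr)
  have houter := card_filter_adj_compl_product hH hF hGZ hFG
  simp only [hdeg] at houter
  refine le_trans ?_ (card_backNeighbors_mul_le_card_forwardSwitchings_of_degree_le hx
    (fun a ha => hdeg a ▸ hsmall a ha) hcross)
  refine mul_le_mul_of_nonneg_left ?_ (Nat.cast_nonneg _)
  have := div_twentyOne_le hr hν
  rw [hr4] at this
  linarith

end

theorem degIn_erase_eq_degree_add_card_backNeighbors {G F : SimpleGraph (Fin n)}
    {Z : Finset (Fin n)} {x z : Fin n}
    (hF : ∀ a b, F.Adj a b → a ∈ Z ∧ b ∉ Z ∨ a ∉ Z ∧ b ∈ Z)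
    (hFG : F ≤ G) (hx : x ∉ Z) (hxz : ¬F.Adj x z) :
    degIn G x (Z.erase z) = F.degree x + #(G.backNeighbors F Z x z) := by
  refine card_filter_adj_eq_degree_add hFG fun b hb => ?_
  rw [mem_neighborFinset] at hb
  have := hF x b hb
  exact mem_erase.2 ⟨by rintro rfl; exact hxz hb, by tauto⟩

end SimpleGraph

open SimpleGraph

def backNeighborsTail (n : ℕ) (D : Fin n → ℕ) (Z : Finset (Fin n)) (H F : SimpleGraph (Fin n))
    (x z : Fin n) (E : SimpleGraph (Fin n) → Prop) (k : ℕ) : Finset (SimpleGraph (Fin n)) :=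
  {G ∈ graphsWithDegreeSeq n D |
    (((∀ a b, a ∈ Z → b ∈ Z → (G.Adj a b ↔ H.Adj a b)) ∧ F ≤ G) ∧ E G) ∧
      k ≤ #(G.backNeighbors F Z x z)}

section FewBackEdges

variable {n : ℕ} {D : Fin n → ℕ} {Z : Finset (Fin n)} {H F G : SimpleGraph (Fin n)}
  {x z : Fin n} {E : SimpleGraph (Fin n) → Prop} {k : ℕ} {ν : ℝ}

theorem mem_backNeighborsTail : G ∈ backNeighborsTail n D Z H F x z E k ↔
    (∀ a, G.degree a = D a) ∧
      (((∀ a b, a ∈ Z → b ∈ Z → (G.Adj a b ↔ H.Adj a b)) ∧ F ≤ G) ∧ E G) ∧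
        k ≤ #(G.backNeighbors F Z x z) := by
  simp only [backNeighborsTail, graphsWithDegreeSeq, mem_filter, mem_univ, true_and]

variable (hn : 10 ^ 8 ≤ n) (hν : ν ≤ 1 / 1000)
  (hH : ∀ a b, H.Adj a b → a ∈ Z ∧ b ∈ Z)
  (hF : ∀ a b, F.Adj a b → a ∈ Z ∧ b ∉ Z ∨ a ∉ Z ∧ b ∈ Z)
  (hx : x ∉ Z) (hz : z ∈ Z)
  (hbig : ∀ w, (n : ℝ) ^ ((1 : ℝ) / 4) < D w → w ∈ Z ∧ H.degree w = D w)
  (hin : ∑ w ∈ Z, ((D w : ℝ) - H.degree w - F.degree w) ≤ ν * n)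
  (hout : (n : ℝ) / 20 ≤ ∑ w ∈ Zᶜ, ((D w : ℝ) - F.degree w))
  (hE : ∀ G G' : SimpleGraph (Fin n), (G.Adj x z ↔ G'.Adj x z) → E G → E G')
include hn hν hH hF hx hz hbig hin hout hE

theorem card_backNeighborsTail_succ_mul_le (k : ℕ) :
    (#(backNeighborsTail n D Z H F x z E (k + 1)) : ℝ) * ((k + 1) * (n / 21)) ≤
      #(backNeighborsTail n D Z H F x z E k) * (((D x : ℝ) - F.degree x) * (ν * n)) := by
  refine card_mul_le_card_mul_of_switching (fwd := fun G => G.forwardSwitchings F Z x z)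
    (bwd := fun G => G.backwardSwitchings F Z x) (f := fun G t => G.switch x t.1 t.2.1 t.2.2)
    (g := fun G t => G.switch x t.2.1 t.1 t.2.2) ?_ ?_ ?_ ?_
  · rintro G hG ⟨w, u, v⟩ ht
    obtain ⟨hdeg, ⟨⟨hGZ, hFG⟩, hEG⟩, hk⟩ := mem_backNeighborsTail.1 hG
    have hs := isSwitching_of_mem_forwardSwitchings ht
    have hw : w ∈ G.backNeighbors F Z x z := (mem_product.1 (mem_filter.1 ht).1).1
    refine ⟨mem_backNeighborsTail.2 ⟨fun a => (hs.degree_switch a).trans (hdeg a),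
      ⟨⟨fun a b ha hb =>
          (switch_adj_of_mem_forwardSwitchings ht hx ha hb).trans (hGZ a b ha hb),
        le_switch_of_mem_forwardSwitchings ht hF hFG⟩,
        hE _ _ (switch_adj_left_of_mem_forwardSwitchings ht hz).symm hEG⟩, ?_⟩,
      mem_backwardSwitchings_switch ht hF hFG hx⟩
    rw [backNeighbors_switch ht, card_erase_of_mem hw]
    omega
  · rintro G - ⟨w, u, v⟩ ht
    exact (isSwitching_of_mem_forwardSwitchings ht).switch_switch
  · intro G hG
    obtain ⟨hdeg, ⟨⟨hGZ, hFG⟩, -⟩, hk⟩ := mem_backNeighborsTail.1 hG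
    refine le_trans ?_ (card_backNeighbors_mul_le_card_forwardSwitchings hH hF hGZ hFG hdeg hin
      hn hν hbig hout hx)
    gcongr
    exact_mod_cast hk
  · intro G hG
    obtain ⟨hdeg, ⟨⟨hGZ, hFG⟩, -⟩, -⟩ := mem_backNeighborsTail.1 hG
    exact card_backwardSwitchings_le hH hF hGZ hFG hdeg hin

variable (hν0 : 0 ≤ ν)
include hν0

theorem card_backNeighborsTail_succ_le {k : ℕ} (hk : √ν * ((D x : ℝ) - F.degree x) < k + 1) :
    (#(backNeighborsTail n D Z H F x z E (k + 1)) : ℝ) ≤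
      21 * √ν * #(backNeighborsTail n D Z H F x z E k) := by
  have hstep := card_backNeighborsTail_succ_mul_le hn hν hH hF hx hz hbig hin hout hE k
  have hpos : 0 < ((k : ℝ) + 1) * (n / 21) := by
    have : (0 : ℝ) < n := by exact_mod_cast (by norm_num : 0 < 10 ^ 8).trans_le hn
    positivity
  have hνs : ν = √ν * √ν := (Real.mul_self_sqrt hν0).symm
  have hrate : ((D x : ℝ) - F.degree x) * (ν * n) ≤ ((k : ℝ) + 1) * (n / 21) * (21 * √ν) :=
    calc ((D x : ℝ) - F.degree x) * (ν * n)
        = √ν * ((D x : ℝ) - F.degree x) * (√ν * n) := by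
          linear_combination ((D x : ℝ) - F.degree x) * n * hνs
      _ ≤ ((k : ℝ) + 1) * (√ν * n) := by gcongr
      _ = ((k : ℝ) + 1) * (n / 21) * (21 * √ν) := by ring
  refine le_of_mul_le_mul_right ?_ hpos
  calc _ ≤ _ := hstep
    _ ≤ _ := mul_le_mul_of_nonneg_left hrate (Nat.cast_nonneg _)
    _ = _ := by ring

theorem card_backNeighborsTail_add_le {m : ℕ} (hm : √ν * ((D x : ℝ) - F.degree x) < m + 1)
    (l : ℕ) :
    (#(backNeighborsTail n D Z H F x z E (m + l)) : ℝ) ≤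
      (21 * √ν) ^ l * #(backNeighborsTail n D Z H F x z E m) := by
  induction l with
  | zero => simp
  | succ l ih =>
    have hk : √ν * ((D x : ℝ) - F.degree x) < ↑(m + l) + 1 := by push_cast; linarith
    calc (#(backNeighborsTail n D Z H F x z E (m + l + 1)) : ℝ)
        ≤ 21 * √ν * #(backNeighborsTail n D Z H F x z E (m + l)) :=
          card_backNeighborsTail_succ_le hn hν hH hF hx hz hbig hin hout hE hν0 hk
      _ ≤ 21 * √ν * ((21 * √ν) ^ l * #(backNeighborsTail n D Z H F x z E m)) := by gcongr
      _ = (21 * √ν) ^ (l + 1) * #(backNeighborsTail n D Z H F x z E m) := by ring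

theorem uniformCondProb_backNeighbors_le (hxz : ¬F.Adj x z) (i : ℕ) :
    uniformCondProb n D
      (fun G => (⌊√ν * ((D x : ℝ) - F.degree x)⌋ : ℝ) + i <
        (degIn G x (Z.erase z) : ℝ) - F.degree x)
      (fun G => ((∀ a b, a ∈ Z → b ∈ Z → (G.Adj a b ↔ H.Adj a b)) ∧ F ≤ G) ∧ E G) ≤
      (22 * √ν) ^ (i + 1) := by
  set m := ⌊√ν * ((D x : ℝ) - F.degree x)⌋₊
  have hnum : {G ∈ graphsWithDegreeSeq n D |
      ((⌊√ν * ((D x : ℝ) - F.degree x)⌋ : ℝ) + i <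
        (degIn G x (Z.erase z) : ℝ) - F.degree x) ∧
        ((∀ a b, a ∈ Z → b ∈ Z → (G.Adj a b ↔ H.Adj a b)) ∧ F ≤ G) ∧ E G} ⊆
      backNeighborsTail n D Z H F x z E (m + (i + 1)) := fun G hG => by
    obtain ⟨hGD, hQ, hC⟩ := mem_filter.1 hG
    have hdeg : ∀ a, G.degree a = D a := (mem_filter.1 hGD).2
    have ht : (0 : ℝ) ≤ (D x : ℝ) - F.degree x := by
      rw [sub_nonneg, ← hdeg]
      exact_mod_cast degree_le_of_le hC.1.2
    rw [degIn_erase_eq_degree_add_card_backNeighbors hF hC.1.2 hx hxz,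
      ← natCast_floor_eq_intCast_floor (by positivity)] at hQ
    push_cast at hQ
    refine mem_backNeighborsTail.2 ⟨hdeg, hC, ?_⟩
    have : (m : ℝ) + i < #(G.backNeighbors F Z x z) := by linarith
    exact_mod_cast this
  have hden : backNeighborsTail n D Z H F x z E m ⊆ {G ∈ graphsWithDegreeSeq n D |
      ((∀ a b, a ∈ Z → b ∈ Z → (G.Adj a b ↔ H.Adj a b)) ∧ F ≤ G) ∧ E G} :=
    fun G hG => by
      obtain ⟨hdeg, hC, -⟩ := mem_backNeighborsTail.1 hG
      exact mem_filter.2 ⟨mem_filter.2 ⟨mem_univ _, hdeg⟩, hC⟩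
  refine div_le_of_le_mul₀ (Nat.cast_nonneg _) (by positivity) ?_
  calc _ ≤ (#(backNeighborsTail n D Z H F x z E (m + (i + 1))) : ℝ) := by
        exact_mod_cast card_le_card hnum
    _ ≤ (21 * √ν) ^ (i + 1) * #(backNeighborsTail n D Z H F x z E m) :=
        card_backNeighborsTail_add_le hn hν hH hF hx hz hbig hin hout hE hν0
          (Nat.lt_floor_add_one _) _
    _ ≤ _ := by
        gcongr
        · linarith [Real.sqrt_nonneg ν]
        · convert hden

end FewBackEdges

/-- **Lemma (few back edges).**
Conditional on `G^D[Z'] = H'`, `F' ⊆ G^D` and additionally on `xz` being (or not being)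
an edge of `G^D`, the probability that `x` has more than `⌊√ν (d(x) - d_{F'}(x))⌋ + i`
non-`F'` neighbours in `Z'' = Z' \ {z}` is at most `(22√ν)^{i+1}`. -/
theorem few_back_edges :
    ∃ ν₀ : ℝ, 0 < ν₀ ∧ ν₀ < 1 ∧ ∀ ν : ℝ, 0 < ν → ν ≤ ν₀ →
    ∃ n₀ : ℕ, ∀ n : ℕ, n₀ ≤ n →
    ∀ Z' : Finset (Fin n), ∀ H' F' : SimpleGraph (Fin n),
    -- `H'` is a graph on the vertex set `Z'`
    (∀ a b, H'.Adj a b → a ∈ Z' ∧ b ∈ Z') →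
    -- `F'` is bipartite with parts `(Z', V \ Z')`
    (∀ a b, F'.Adj a b → ((a ∈ Z' ∧ b ∉ Z') ∨ (a ∉ Z' ∧ b ∈ Z'))) →
    ∀ x z : Fin n, x ∉ Z' → z ∈ Z' → ¬ F'.Adj x z →
    ∀ D : Fin n → ℕ, (∀ w, 1 ≤ D w) →
    -- all large-degree vertices lie in `Z'` with all their edges in `H'`
    (∀ w : Fin n, (n : ℝ) ^ ((1 : ℝ) / 4) < (D w : ℝ) → w ∈ Z' ∧ H'.degree w = D w) →
    -- few free half-edges inside `Z'`
    (∑ w ∈ Z', ((D w : ℝ) - (H'.degree w : ℝ) - (F'.degree w : ℝ))) ≤ ν * n →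
    -- many free half-edges outside `Z'`
    (n : ℝ) / 20 ≤ (∑ w ∈ Finset.univ.filter (fun w => w ∉ Z'),
        ((D w : ℝ) - (F'.degree w : ℝ))) →
    ∀ i : ℕ,
    (let B : SimpleGraph (Fin n) → Prop :=
      fun G => (∀ a b, a ∈ Z' → b ∈ Z' → (G.Adj a b ↔ H'.Adj a b)) ∧ F' ≤ G;
     let Q : SimpleGraph (Fin n) → Prop :=
      fun G => ((⌊Real.sqrt ν * ((D x : ℝ) - (F'.degree x : ℝ))⌋ : ℝ) + i <
        (degIn G x (Z'.erase z) : ℝ) - (F'.degree x : ℝ));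
     -- conditioning additionally on `xz ∈ E(G^D)`
     (0 < ((graphsWithDegreeSeq n D).filter (fun G => B G ∧ G.Adj x z)).card →
        uniformCondProb n D Q (fun G => B G ∧ G.Adj x z)
          ≤ (22 * Real.sqrt ν) ^ (i + 1)) ∧
     -- conditioning additionally on `xz ∉ E(G^D)`
     (0 < ((graphsWithDegreeSeq n D).filter (fun G => B G ∧ ¬ G.Adj x z)).card →
        uniformCondProb n D Q (fun G => B G ∧ ¬ G.Adj x z)
          ≤ (22 * Real.sqrt ν) ^ (i + 1)) ∧
     -- conditioning only on `B`
     (0 < ((graphsWithDegreeSeq n D).filter B).card →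
        uniformCondProb n D Q B ≤ (22 * Real.sqrt ν) ^ (i + 1))) := by
  refine ⟨1 / 1000, by norm_num, by norm_num, fun ν hν0 hν => ⟨10 ^ 8,
    fun n hn Z' H' F' hH hF x z hx hz hxzF D _ hbig hin hout i => ?_⟩⟩
  have hout' : (n : ℝ) / 20 ≤ ∑ w ∈ Z'ᶜ, ((D w : ℝ) - F'.degree w) := by
    convert hout using 2
    ext
    simp
  have key := fun E hE => uniformCondProb_backNeighbors_le (E := E) hn hν hH hF hx hz hbig hin
    hout' hE hν0.le hxzF i
  refine ⟨fun _ => key _ fun _ _ h => h.1, fun _ => key _ fun _ _ h => mt h.2, fun _ => ?_⟩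
  simpa using key (fun _ => True) fun _ _ _ _ => trivial
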